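/- Let u and v be nonempty finite words over a totally ordered alphabet such that u^ω < v^ω in the lexicographic order on infinite words, and suppose v is not a fractional power of u. Let k be the largest integer such that u^k is a prefix of v. Then for all finite words x and y, (u^{k+1} x)^ω < (v y)^ω; in particular, u^ω < (vy)^ω for every finite word y. -/
import Mathlib


variable {A : Type*} [LinearOrder A] [Inhabited A]

/-- The infinite periodic word `u^ω = uuu⋯`, as a function `ℕ → A`. -/
def omegaPow (u : List A) : ℕ → A := fun n => u.getD (n % u.length) default

/-- Lexicographic order on infinite words: `s < t` iff at the first position where
they differ, `s` has the smaller letter. -/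
def lexLt (s t : ℕ → A) : Prop := ∃ k, (∀ i < k, s i = t i) ∧ s k < t k

/-- `v` is a fractional power of `u`: `v = u^k u₁` for some `k ≥ 0` and some prefix `u₁` of `u`. -/
def IsFracPow (u v : List A) : Prop :=
  ∃ (k : ℕ) (u₁ : List A), u₁ <+: u ∧ v = (List.replicate k u).flatten ++ u₁

lemma length_flatten_replicate (u : List A) (k : ℕ) :
    ((List.replicate k u).flatten).length = k * u.length := by
  simp [List.length_flatten, mul_comm]

lemma getD_flatten_replicate (u : List A) (k i : ℕ) (h : i < k * u.length) :
    ((List.replicate k u).flatten).getD i default = u.getD (i % u.length) default := by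
  induction k generalizing i with
  | zero => simp at h
  | succ k ih =>
    rw [List.replicate_succ, List.flatten_cons]
    rcases lt_or_ge i u.length with hi | hi
    · rw [List.getD_append _ _ _ _ hi, Nat.mod_eq_of_lt hi]
    · have h' : i - u.length < k * u.length := by
        have hb : Nat.succ k * u.length = k * u.length + u.length :=
          Nat.succ_mul k u.length
        have hb' : (k + 1) * u.length = Nat.succ k * u.length := rfl
        omega
      rw [List.getD_append_right _ _ _ _ hi, ih _ h', Nat.mod_eq_sub_mod hi]

lemma prefix_of_getD (s t : List A) (hle : s.length ≤ t.length)
    (h : ∀ i < s.length, s.getD i default = t.getD i default) : s <+: t := by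
  rw [List.prefix_iff_eq_take]
  apply List.ext_getElem
  · simp [Nat.min_eq_left hle]
  · intro i h1 h2
    have := h i h1
    rw [List.getD_eq_getElem _ _ h1,
      List.getD_eq_getElem _ _ (lt_of_lt_of_le h1 hle)] at this
    rw [this, List.getElem_take]

/-- If `u^ω < v^ω` and `v` is not a fractional power of `u`, and `k` is the largest
integer such that `u^k` is a prefix of `v`, then `(u^{k+1} x)^ω < (v y)^ω` for all
finite words `x, y`; in particular `u^ω < (vy)^ω` for every `y`. -/
theorem omegaPow_pow_append_lt (u v : List A) (hu : u ≠ []) (hv : v ≠ [])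
    (hlt : lexLt (omegaPow u) (omegaPow v))
    (hfp : ¬ IsFracPow u v)
    (k : ℕ) (hk : (List.replicate k u).flatten <+: v)
    (hk' : ¬ (List.replicate (k + 1) u).flatten <+: v) :
    (∀ x y : List A,
      lexLt (omegaPow ((List.replicate (k + 1) u).flatten ++ x)) (omegaPow (v ++ y))) ∧
    (∀ y : List A, lexLt (omegaPow u) (omegaPow (v ++ y))) := by
  obtain ⟨d, hag, hd⟩ := hlt
  have hL : 0 < u.length := List.length_pos_iff.mpr hu
  have hou : ∀ i, omegaPow u i = u.getD (i % u.length) default := fun i => rfl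
  have houv : ∀ i < v.length, omegaPow v i = v.getD i default := by
    intro i hi
    simp only [omegaPow, Nat.mod_eq_of_lt hi]
  -- Step 1: d < v.length, else v would be a fractional power of u
  have hdv : d < v.length := by
    by_contra h
    push_neg at h
    apply hfp
    set q := v.length / u.length with hq
    set r := v.length % u.length with hr
    have hmod : r < u.length := Nat.mod_lt _ hL
    have hdm : u.length * q + r = v.length := Nat.div_add_mod v.length u.length
    refine ⟨q, u.take r, List.take_prefix _ _, ?_⟩
    have hflen : ((List.replicate q u).flatten).length = q * u.length :=
      length_flatten_replicate u q
    have hlens : ((List.replicate q u).flatten ++ u.take r).length = v.length := by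
      rw [List.length_append, hflen, List.length_take, Nat.min_eq_left (le_of_lt hmod),
        mul_comm]
      omega
    refine (List.IsPrefix.eq_of_length ?_ hlens).symm
    apply prefix_of_getD _ _ (le_of_eq hlens)
    intro i hi
    rw [hlens] at hi
    have hagi : u.getD (i % u.length) default = v.getD i default := by
      have := hag i (lt_of_lt_of_le hi h)
      rw [hou, houv i hi] at this
      exact this
    rcases lt_or_ge i (q * u.length) with hiq | hiq
    · rw [List.getD_append _ _ _ _ (by rw [hflen]; exact hiq),
        getD_flatten_replicate u q i hiq, hagi]
    · rw [List.getD_append_right _ _ _ _ (by rw [hflen]; exact hiq), hflen]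
      have hir : i - q * u.length < r := by
        have : q * u.length = u.length * q := mul_comm _ _
        omega
      have hmodi : i % u.length = i - q * u.length := by
        conv_lhs => rw [show i = u.length * q + (i - q * u.length) by
          rw [mul_comm]; omega]
        rw [Nat.mul_add_mod, Nat.mod_eq_of_lt (lt_trans hir hmod)]
      have htake : (u.take r).getD (i - q * u.length) default
          = u.getD (i - q * u.length) default := by
        have h1 : i - q * u.length < (u.take r).length := by
          rw [List.length_take, Nat.min_eq_left (le_of_lt hmod)]; exact hir
        rw [List.getD_eq_getElem _ _ h1, List.getElem_take,
          List.getD_eq_getElem _ _ (lt_trans hir hmod)]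
      rw [htake, ← hmodi, hagi]
  -- Step 2: d < (k+1) * u.length, else u^(k+1) would be a prefix of v
  have hdU : d < ((List.replicate (k + 1) u).flatten).length := by
    by_contra h
    push_neg at h
    apply hk'
    apply prefix_of_getD _ _ (by omega)
    intro i hi
    have hi' : i < (k + 1) * u.length := by rwa [length_flatten_replicate] at hi
    rw [getD_flatten_replicate u (k + 1) i hi']
    have := hag i (lt_of_lt_of_le hi h)
    rw [hou, houv i (by omega)] at this
    exact this
  -- agreement lemmas up to position d
  have hsd : ∀ (x : List A) (i : ℕ), i ≤ d →
      omegaPow ((List.replicate (k + 1) u).flatten ++ x) i = omegaPow u i := by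
    intro x i hi
    have hlen : i < ((List.replicate (k + 1) u).flatten ++ x).length := by
      rw [List.length_append]; omega
    simp only [omegaPow, Nat.mod_eq_of_lt hlen]
    rw [List.getD_append _ _ _ _ (by omega)]
    have hi' : i < (k + 1) * u.length := by
      rw [← length_flatten_replicate u (k + 1)]; omega
    rw [getD_flatten_replicate u (k + 1) i hi']
  have htd : ∀ (y : List A) (i : ℕ), i ≤ d →
      omegaPow (v ++ y) i = omegaPow v i := by
    intro y i hi
    have hiv : i < v.length := by omega
    have hlen : i < (v ++ y).length := by rw [List.length_append]; omega
    simp only [omegaPow, Nat.mod_eq_of_lt hlen, Nat.mod_eq_of_lt hiv]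
    rw [List.getD_append _ _ _ _ hiv]
  constructor
  · intro x y
    refine ⟨d, fun i hi => ?_, ?_⟩
    · rw [hsd x i (le_of_lt hi), htd y i (le_of_lt hi)]
      exact hag i hi
    · rw [hsd x d le_rfl, htd y d le_rfl]
      exact hd
  · intro y
    refine ⟨d, fun i hi => ?_, ?_⟩
    · rw [htd y i (le_of_lt hi)]
      exact hag i hi
    · rw [htd y d le_rfl]
      exact hd
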